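/- For any class of Kripke frames F: ◇□φ ⊨^g_F □φ holds for all formulas φ if and only if every frame (W,R) in F is globally Euclidean, i.e., satisfies ∀w ∀x ∃y ∀z (Rwx ∧ Ryz → Rzx). -/

import Mathlib

/-- Formulas of the basic modal language. -/
inductive Form : Type where
  | var : ℕ → Form
  | bot : Form
  | imp : Form → Form → Form
  | box : Form → Form

def Form.neg (φ : Form) : Form := .imp φ .bot
def Form.dia (φ : Form) : Form := .neg (.box (.neg φ))
def Form.or (φ ψ : Form) : Form := .imp (.neg φ) ψ
def Form.and (φ ψ : Form) : Form := .neg (.imp φ (.neg ψ))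

/-- A Kripke frame: a nonempty set of worlds with an accessibility relation. -/
structure Frame : Type 1 where
  W : Type
  R : W → W → Prop
  nonempty : Nonempty W

/-- Truth at a world of a model. -/
def Frame.sat (F : Frame) (V : ℕ → F.W → Prop) : F.W → Form → Prop
  | w, .var n => V n w
  | _, .bot => False
  | w, .imp φ ψ => F.sat V w φ → F.sat V w ψ
  | w, .box φ => ∀ u, F.R w u → F.sat V u φ

/-- Local consequence with respect to a class of frames. -/
def localConseq (C : Frame → Prop) (Γ : Set Form) (φ : Form) : Prop :=
  ∀ F, C F → ∀ V : ℕ → F.W → Prop, ∀ w : F.W,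
    (∀ ψ ∈ Γ, F.sat V w ψ) → F.sat V w φ

/-- Global consequence with respect to a class of frames. -/
def globalConseq (C : Frame → Prop) (Γ : Set Form) (φ : Form) : Prop :=
  ∀ F, C F → ∀ V : ℕ → F.W → Prop,
    (∀ ψ ∈ Γ, ∀ w : F.W, F.sat V w ψ) → ∀ w : F.W, F.sat V w φ

/-- □ⁿφ -/
def boxIter : ℕ → Form → Form
  | 0, φ => φ
  | n+1, φ => .box (boxIter n φ)

/-- ◇ⁿφ -/
def diaIter : ℕ → Form → Form
  | 0, φ => φ
  | n+1, φ => .dia (diaIter n φ)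

/-- □^ωΓ = {□ⁿψ | n ∈ ℕ, ψ ∈ Γ} -/
def boxOmega (Γ : Set Form) : Set Form :=
  {χ | ∃ n ψ, ψ ∈ Γ ∧ χ = boxIter n ψ}

/-- The subframe of `F` generated by the point `w`. -/
def Frame.gen (F : Frame) (w : F.W) : Frame where
  W := {v : F.W // Relation.ReflTransGen F.R w v}
  R a b := F.R a.1 b.1
  nonempty := ⟨⟨w, Relation.ReflTransGen.refl⟩⟩

/-- A class of frames is closed under point-generated subframes. -/
def closedGen (C : Frame → Prop) : Prop :=
  ∀ F, C F → ∀ w : F.W, C (F.gen w)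

/-- Modal-free (purely propositional) formulas. -/
def modalFree : Form → Prop
  | .var _ => True
  | .bot => True
  | .imp φ ψ => modalFree φ ∧ modalFree ψ
  | .box _ => False

def Frame.GloballyEuclidean (F : Frame) : Prop :=
  ∀ w x : F.W, ∃ y : F.W, ∀ z : F.W, F.R w x → F.R y z → F.R z x

namespace Frame

variable {F : Frame} {V : ℕ → F.W → Prop}

theorem sat_dia {w : F.W} {φ : Form} :
    F.sat V w φ.dia ↔ ∃ u, F.R w u ∧ F.sat V u φ := by
  simp only [Form.dia, Form.neg, sat]
  grind

theorem sat_box_of_forall_sat_dia_box (hF : F.GloballyEuclidean) {φ : Form}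
    (h : ∀ v, F.sat V v (.dia (.box φ))) (w : F.W) : F.sat V w (.box φ) := by
  intro x hwx
  obtain ⟨y, hy⟩ := hF w x
  obtain ⟨z, hyz, hz⟩ := sat_dia.mp (h y)
  exact hz x (hy z hwx hyz)

theorem globallyEuclidean_of_forall_sat_dia_box
    (h : ∀ V : ℕ → F.W → Prop, (∀ v, F.sat V v (.dia (.box (.var 0)))) →
      ∀ w, F.sat V w (.box (.var 0))) :
    F.GloballyEuclidean := by
  intro w x
  by_contra! hx
  obtain ⟨y₀⟩ := F.nonempty
  obtain ⟨-, hwx, -, -⟩ := hx y₀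
  -- `p` fails only at `x`, so `□p` holds exactly at the worlds that do not see `x`.
  let V : ℕ → F.W → Prop := fun _ u => u ≠ x
  have hdia : ∀ v, F.sat V v (.dia (.box (.var 0))) := fun v => by
    obtain ⟨z, -, hvz, hzx⟩ := hx v
    exact sat_dia.mpr ⟨z, hvz, fun u hzu hux => hzx (hux ▸ hzu)⟩
  exact h V hdia w x hwx rfl

theorem globallyEuclidean_iff_forall_sat_dia_box :
    F.GloballyEuclidean ↔ ∀ (φ : Form) (V : ℕ → F.W → Prop),
      (∀ v, F.sat V v (.dia (.box φ))) → ∀ w, F.sat V w (.box φ) :=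
  ⟨fun hF _ _ h => sat_box_of_forall_sat_dia_box hF h,
    fun h => globallyEuclidean_of_forall_sat_dia_box (h (.var 0))⟩

end Frame

theorem globalConseq_singleton {C : Frame → Prop} {ψ φ : Form} :
    globalConseq C {ψ} φ ↔
      ∀ F, C F → ∀ V : ℕ → F.W → Prop, (∀ w, F.sat V w ψ) → ∀ w, F.sat V w φ := by
  simp only [globalConseq, Set.mem_singleton_iff, forall_eq]

/-- ◇□φ ⊨^g_F □φ for all φ iff every frame in F is globally
Euclidean: ∀w ∀x ∃y ∀z (Rwx ∧ Ryz → Rzx). -/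
theorem stmt14 (C : Frame → Prop) :
    (∀ φ : Form, globalConseq C {Form.dia (.box φ)} (.box φ)) ↔
      ∀ F, C F → ∀ w x : F.W, ∃ y : F.W, ∀ z : F.W,
        F.R w x → F.R y z → F.R z x := by
  simp only [globalConseq_singleton]
  change _ ↔ ∀ F, C F → F.GloballyEuclidean
  simp only [Frame.globallyEuclidean_iff_forall_sat_dia_box]
  exact ⟨fun h F hF φ => h φ F hF, fun h φ F hF => h F hF φ⟩
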